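/- Let $(P_t)_{t\in T}$ and $(Q_t)_{t\in T}$ be measurable families of probability densities on a $\sigma$-finite measured space $(E,\mathcal{A},\nu)$, and let $q$ be a probability density on a $\sigma$-finite space $(T,\mathcal{T},m)$. Then $h^2\big(\int_T P_t q(t)\,dm(t),\ \int_T Q_t q(t)\,dm(t)\big) \le 2\int_T h^2(P_t,Q_t)\,q(t)\,dm(t)$. -/

import Mathlib

open MeasureTheory

/-- Squared Hellinger distance between two densities on a measured space. -/
noncomputable def hell2 {E : Type*} [MeasurableSpace E] (ν : Measure E) (f g : E → ℝ) : ℝ :=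
  (1 / 2) * ∫ x, (Real.sqrt (f x) - Real.sqrt (g x)) ^ 2 ∂ν

/-!
For each `x`, Cauchy–Schwarz in `t` gives
`(√(∫ P_t(x) q) - √(∫ Q_t(x) q))² ≤ ∫ (√P_t(x) - √Q_t(x))² q`,
i.e. Jensen's inequality for the convex, positively homogeneous map `(a, b) ↦ (√a - √b)²`.
Integrating in `x` and swapping the integrals (Fubini, the integrand being dominated by
`(P_t(x) + Q_t(x)) q(t)`) yields `h²(∫ P_t q, ∫ Q_t q) ≤ ∫ h²(P_t, Q_t) q`, even with constant `1`.
-/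

open Function Real

lemma Real.sqrt_mul_sqrt_le_add {a b : ℝ} (ha : 0 ≤ a) (hb : 0 ≤ b) : √a * √b ≤ a + b := by
  nlinarith [sq_sqrt ha, sq_sqrt hb, sq_nonneg (√a - √b)]

lemma Real.sq_sqrt_sub_sqrt_le_add {a b : ℝ} (ha : 0 ≤ a) (hb : 0 ≤ b) :
    (√a - √b) ^ 2 ≤ a + b := by
  nlinarith [sq_sqrt ha, sq_sqrt hb, mul_nonneg (sqrt_nonneg a) (sqrt_nonneg b)]

lemma Real.sq_sqrt_mul_sub_sqrt_mul (a b : ℝ) {c : ℝ} (hc : 0 ≤ c) :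
    (√(a * c) - √(b * c)) ^ 2 = (√a - √b) ^ 2 * c := by
  rw [sqrt_mul' a hc, sqrt_mul' b hc, ← sub_mul, mul_pow, sq_sqrt hc]

section SqrtIntegrals

variable {α : Type*} [MeasurableSpace α] {μ : Measure α} {f g : α → ℝ}

lemma MeasureTheory.Integrable.sqrt_mul_sqrt (hf : Integrable f μ) (hg : Integrable g μ)
    (hf0 : 0 ≤ f) (hg0 : 0 ≤ g) : Integrable (fun a => √(f a) * √(g a)) μ := by
  refine (hf.add hg).mono' ?_ (.of_forall fun a => ?_)
  · exact (continuous_sqrt.comp_aestronglyMeasurable hf.1).mul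
      (continuous_sqrt.comp_aestronglyMeasurable hg.1)
  · rw [norm_of_nonneg (by positivity)]
    exact sqrt_mul_sqrt_le_add (hf0 a) (hg0 a)

lemma integral_sqrt_mul_sqrt_le (hf : Integrable f μ) (hg : Integrable g μ)
    (hf0 : 0 ≤ f) (hg0 : 0 ≤ g) :
    ∫ a, √(f a) * √(g a) ∂μ ≤ √(∫ a, f a ∂μ) * √(∫ a, g a ∂μ) := by
  have memLp_sqrt : ∀ {h : α → ℝ}, Integrable h μ → 0 ≤ h →
      MemLp (fun a => √(h a)) (ENNReal.ofReal 2) μ := fun {h} hh hh0 => by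
    rw [ENNReal.ofReal_ofNat, memLp_two_iff_integrable_sq
      (continuous_sqrt.comp_aestronglyMeasurable hh.1)]
    simpa only [sq_sqrt (hh0 _)] using hh
  simpa only [rpow_two, sq_sqrt (hf0 _), sq_sqrt (hg0 _), ← sqrt_eq_rpow] using
    integral_mul_le_Lp_mul_Lq_of_nonneg Real.HolderConjugate.two_two
      (.of_forall fun a => sqrt_nonneg (f a)) (.of_forall fun a => sqrt_nonneg (g a))
      (memLp_sqrt hf hf0) (memLp_sqrt hg hg0)

lemma integral_sq_sqrt_sub_sqrt (hf : Integrable f μ) (hg : Integrable g μ)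
    (hf0 : 0 ≤ f) (hg0 : 0 ≤ g) :
    ∫ a, (√(f a) - √(g a)) ^ 2 ∂μ
      = ∫ a, f a ∂μ + ∫ a, g a ∂μ - 2 * ∫ a, √(f a) * √(g a) ∂μ := by
  have expand : ∀ a, (√(f a) - √(g a)) ^ 2 = f a + g a - 2 * (√(f a) * √(g a)) := fun a => by
    rw [sub_sq, sq_sqrt (hf0 a), sq_sqrt (hg0 a)]; ring
  simp only [expand]
  rw [integral_sub (by exact hf.add hg) ((hf.sqrt_mul_sqrt hg hf0 hg0).const_mul 2),
    integral_add hf hg, integral_const_mul]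

lemma sq_sqrt_integral_sub_sqrt_integral_le (hf : Integrable f μ) (hg : Integrable g μ)
    (hf0 : 0 ≤ f) (hg0 : 0 ≤ g) :
    (√(∫ a, f a ∂μ) - √(∫ a, g a ∂μ)) ^ 2 ≤ ∫ a, (√(f a) - √(g a)) ^ 2 ∂μ := by
  rw [integral_sq_sqrt_sub_sqrt hf hg hf0 hg0, sub_sq, sq_sqrt (integral_nonneg hf0),
    sq_sqrt (integral_nonneg hg0)]
  linarith [integral_sqrt_mul_sqrt_le hf hg hf0 hg0]

end SqrtIntegrals

lemma hell2_nonneg {E : Type*} [MeasurableSpace E] (ν : Measure E) (f g : E → ℝ) :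
    0 ≤ hell2 ν f g :=
  mul_nonneg (by norm_num) (integral_nonneg fun _ => sq_nonneg _)

section Mixture

variable {T E : Type*} [MeasurableSpace T] [MeasurableSpace E] {m : Measure T} {ν : Measure E}
  [SFinite ν] {q : T → ℝ} {P Q : T → E → ℝ}

lemma integrable_uncurry_mul_of_integral_eq_one (hq : Integrable q m) (hqm : Measurable q)
    (hP0 : ∀ t x, 0 ≤ P t x) (hPm : Measurable (uncurry P)) (hP1 : ∀ t, ∫ x, P t x ∂ν = 1) :
    Integrable (uncurry fun t x => P t x * q t) (m.prod ν) := by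
  refine (integrable_prod_iff (f := uncurry fun t x => P t x * q t)
    (hPm.mul (hqm.comp measurable_fst)).aestronglyMeasurable).2
    ⟨.of_forall fun t => ?_, hq.norm.congr (.of_forall fun t => ?_)⟩
  · exact (Integrable.of_integral_ne_zero (f := P t) (μ := ν) (by simp [hP1 t])).mul_const (q t)
  · simp only [uncurry_apply_pair, norm_mul, norm_of_nonneg (hP0 t _), integral_mul_const, hP1 t,
      one_mul]

theorem hell2_mixture_le [SFinite m] (hq0 : ∀ t, 0 ≤ q t) (hqm : Measurable q)
    (hq : Integrable q m)
    (hP0 : ∀ t x, 0 ≤ P t x) (hQ0 : ∀ t x, 0 ≤ Q t x)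
    (hPm : Measurable (uncurry P)) (hQm : Measurable (uncurry Q))
    (hP1 : ∀ t, ∫ x, P t x ∂ν = 1) (hQ1 : ∀ t, ∫ x, Q t x ∂ν = 1) :
    hell2 ν (fun x => ∫ t, P t x * q t ∂m) (fun x => ∫ t, Q t x * q t ∂m) ≤
      ∫ t, hell2 ν (P t) (Q t) * q t ∂m := by
  have hPq := integrable_uncurry_mul_of_integral_eq_one hq hqm hP0 hPm hP1
  have hQq := integrable_uncurry_mul_of_integral_eq_one hq hqm hQ0 hQm hQ1
  set D : T → E → ℝ := fun t x => (√(P t x) - √(Q t x)) ^ 2 * q t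
  have hD : Integrable (uncurry D) (m.prod ν) := by
    refine (hPq.add hQq).mono' ?_ (.of_forall fun ⟨t, x⟩ => ?_)
    · exact (((hPm.sqrt.sub hQm.sqrt).pow_const 2).mul
        (hqm.comp measurable_fst)).aestronglyMeasurable
    · simp only [uncurry_apply_pair, Pi.add_apply, D]
      rw [norm_of_nonneg (mul_nonneg (sq_nonneg _) (hq0 _)), ← add_mul]
      exact mul_le_mul_of_nonneg_right (sq_sqrt_sub_sqrt_le_add (hP0 _ _) (hQ0 _ _)) (hq0 _)
  have pointwise : ∀ᵐ x ∂ν,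
      (√(∫ t, P t x * q t ∂m) - √(∫ t, Q t x * q t ∂m)) ^ 2 ≤ ∫ t, D t x ∂m := by
    filter_upwards [hPq.prod_left_ae, hQq.prod_left_ae] with x hPx hQx
    simpa only [D, uncurry_apply_pair, sq_sqrt_mul_sub_sqrt_mul _ _ (hq0 _)] using
      sq_sqrt_integral_sub_sqrt_integral_le hPx hQx (fun t => mul_nonneg (hP0 t x) (hq0 t))
        (fun t => mul_nonneg (hQ0 t x) (hq0 t))
  calc hell2 ν (fun x => ∫ t, P t x * q t ∂m) (fun x => ∫ t, Q t x * q t ∂m)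
      ≤ 1 / 2 * ∫ x, ∫ t, D t x ∂m ∂ν := by
        unfold hell2
        exact mul_le_mul_of_nonneg_left (integral_mono_of_nonneg (.of_forall fun _ => sq_nonneg _)
          hD.integral_prod_right pointwise) (by norm_num)
    _ = ∫ t, hell2 ν (P t) (Q t) * q t ∂m := by
        rw [← integral_integral_swap hD, ← integral_const_mul]
        simp only [D, integral_mul_const, hell2, mul_assoc]

end Mixture

/-- Changing only the component densities:
`h²(∫ P_t q(t) dm, ∫ Q_t q(t) dm) ≤ 2 ∫ h²(P_t,Q_t) q(t) dm`. -/
theorem hellinger_mixture_components {T E : Type*} [MeasurableSpace T] [MeasurableSpace E]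
    (m : Measure T) (ν : Measure E) [SigmaFinite m] [SigmaFinite ν]
    (q : T → ℝ) (P Q : T → E → ℝ)
    (hq0 : ∀ t, 0 ≤ q t) (hqm : Measurable q) (hq1 : ∫ t, q t ∂m = 1)
    (hP0 : ∀ t x, 0 ≤ P t x) (hQ0 : ∀ t x, 0 ≤ Q t x)
    (hPm : Measurable (Function.uncurry P)) (hQm : Measurable (Function.uncurry Q))
    (hP1 : ∀ t, ∫ x, P t x ∂ν = 1) (hQ1 : ∀ t, ∫ x, Q t x ∂ν = 1) :
    hell2 ν (fun x => ∫ t, P t x * q t ∂m) (fun x => ∫ t, Q t x * q t ∂m) ≤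
      2 * ∫ t, hell2 ν (P t) (Q t) * q t ∂m := by
  have hq : Integrable q m := .of_integral_ne_zero (by simp [hq1])
  have hmix := hell2_mixture_le hq0 hqm hq hP0 hQ0 hPm hQm hP1 hQ1
  have hnonneg : 0 ≤ ∫ t, hell2 ν (P t) (Q t) * q t ∂m :=
    integral_nonneg fun t => mul_nonneg (hell2_nonneg ν _ _) (hq0 t)
  linarith
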